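/- Let M be a positroid on [n] without coloops. Then for any proper subset A ⊊ [n], rk_M(A) ≤ |A| − cw_M(A). -/

import Mathlib

open Finset

attribute [local instance] Classical.propDecidable

noncomputable section

/-- A matroid on `Fin n`, presented by its collection of bases (basis exchange axiom). -/
structure FinMatroid (n : ℕ) where
  bases : Finset (Finset (Fin n))
  bases_nonempty : bases.Nonempty
  exchange : ∀ B₁ ∈ bases, ∀ B₂ ∈ bases, ∀ x ∈ B₁ \ B₂,
      ∃ y ∈ B₂ \ B₁, insert y (B₁.erase x) ∈ bases

/-- Rank function associated to a collection of bases: `rk S = max |S ∩ B|`. -/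
def rkOf {n : ℕ} (Bs : Finset (Finset (Fin n))) (S : Finset (Fin n)) : ℕ :=
  Bs.sup fun B => (S ∩ B).card

/-- Rank function of a matroid. -/
def rk {n : ℕ} (M : FinMatroid n) (S : Finset (Fin n)) : ℕ := rkOf M.bases S

/-- Independence w.r.t. a collection of bases. -/
def Indep {n : ℕ} (Bs : Finset (Finset (Fin n))) (S : Finset (Fin n)) : Prop :=
  ∃ B ∈ Bs, S ⊆ B

/-- A circuit: a dependent set all of whose proper subsets are independent. -/
def IsCircuit {n : ℕ} (Bs : Finset (Finset (Fin n))) (C : Finset (Fin n)) : Prop :=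
  ¬ Indep Bs C ∧ ∀ D ⊆ C, D ≠ C → Indep Bs D

/-- `M` is a quotient of `N`: every circuit of `N` is a union of circuits of `M`. -/
def IsQuotient {n : ℕ} (BsM BsN : Finset (Finset (Fin n))) : Prop :=
  ∀ C, IsCircuit BsN C → ∃ 𝒟 : Finset (Finset (Fin n)),
    (∀ D ∈ 𝒟, IsCircuit BsM D) ∧ C = 𝒟.sup id

/-- The values of a finset under the key `f`, sorted increasingly. -/
def sortedVals {n : ℕ} (f : Fin n → ℕ) (A : Finset (Fin n)) : List ℕ :=
  (A.image f).sort (· ≤ ·)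

/-- Gale order (w.r.t. the total order on `Fin n` given by an injective key `f`):
`A ≤ B` iff the `i`-th smallest element of `A` is `≤` the `i`-th smallest element of `B`. -/
def galeLE {n : ℕ} (f : Fin n → ℕ) (A B : Finset (Fin n)) : Prop :=
  List.Forall₂ (· ≤ ·) (sortedVals f A) (sortedVals f B)

/-- Position of `a` in the cyclic order starting at `i` (so `cpos i i = 0`). -/
def cpos {n : ℕ} (i a : Fin n) : ℕ := ((a - i : Fin n) : ℕ)

/-- Cyclic half-open interval `(a, b]`; in particular `(a, a] = ∅`. -/
def cycIoc {n : ℕ} (a b : Fin n) : Finset (Fin n) :=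
  Finset.univ.filter fun x => cpos a x ≠ 0 ∧ cpos a x ≤ cpos a b

/-- Cyclic closed interval `[a, b]`. -/
def cycIcc {n : ℕ} (a b : Fin n) : Finset (Fin n) :=
  Finset.univ.filter fun x => cpos a x ≤ cpos a b

/-- A decorated permutation: a permutation together with a coloring in `{0, ±1}`
whose zero set is exactly the set of non-fixed points. -/
structure DecoratedPerm (n : ℕ) where
  perm : Equiv.Perm (Fin n)
  col : Fin n → ℤ
  col_range : ∀ i, col i = 0 ∨ col i = 1 ∨ col i = -1
  col_zero_iff : ∀ i, col i = 0 ↔ perm i ≠ i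

/-- Grassmann necklace term `I_i = {a : a <_i π⁻¹(a) or col a = -1}`. -/
def neck {n : ℕ} (π : DecoratedPerm n) (i : Fin n) : Finset (Fin n) :=
  Finset.univ.filter fun a => cpos i a < cpos i (π.perm.symm a) ∨ π.col a = -1

/-- Grassmann conecklace term `J_i = π⁻¹(I_i)`. -/
def coneck {n : ℕ} (π : DecoratedPerm n) (i : Fin n) : Finset (Fin n) :=
  (neck π i).image π.perm.symm

/-- Rank of a decorated permutation: the common size of its necklace terms. -/
def drank {n : ℕ} (π : DecoratedPerm n) : ℕ :=
  if h : 0 < n then (neck π ⟨0, h⟩).card else 0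

/-- Grassmann interval `S^π_i = (π⁻¹(i), i]`, with the coloop convention `[n]`
(the loop convention `∅` is automatic since `(i, i] = ∅`). -/
def SInt {n : ℕ} (π : DecoratedPerm n) (i : Fin n) : Finset (Fin n) :=
  if π.col i = -1 then Finset.univ else cycIoc (π.perm.symm i) i

/-- Shift interval `S^{π,σ}_i = (π⁻¹(i), σ⁻¹(i)]`, with the convention `[n]` when
`i` is a loop of `π` and a coloop of `σ`. -/
def shiftInt {n : ℕ} (π σ : DecoratedPerm n) (i : Fin n) : Finset (Fin n) :=
  if π.col i = 1 ∧ σ.col i = -1 then Finset.univ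
  else cycIoc (π.perm.symm i) (σ.perm.symm i)

/-- CW-arrow starting at `i`: the cyclic interval from `i` to `π(i)` (all of `[n]` for coloops). -/
def cwArrow {n : ℕ} (π : DecoratedPerm n) (i : Fin n) : Finset (Fin n) :=
  if π.col i = -1 then Finset.univ
  else Finset.univ.filter fun j => cpos i j ≤ cpos i (π.perm i)

/-- The CW-function: the number of CW-arrows contained in `A` (for `A ≠ [n]`),
and `n - rk(M)` for `A = [n]`. -/
def cw {n : ℕ} (π : DecoratedPerm n) (A : Finset (Fin n)) : ℕ :=
  if A = Finset.univ then n - drank π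
  else (Finset.univ.filter fun i => cwArrow π i ⊆ A).card

/-- Bases of the positroid associated with a decorated permutation: sets that are
above every necklace term in the corresponding cyclic Gale order. -/
def positroidBases {n : ℕ} (π : DecoratedPerm n) : Finset (Finset (Fin n)) :=
  Finset.univ.filter fun B => ∀ i, galeLE (cpos i) (neck π i) B

/-- `σ` is the cyclic shift `ρ_A(π)`: positions in `A` are frozen; at a position
`i ∉ A` the new value is `π(j)` where `j` is the maximum of `Aᶜ` in the cyclic order
starting at `i`; new fixed points are decorated as loops. -/
def IsCyclicShift {n : ℕ} (π σ : DecoratedPerm n) (A : Finset (Fin n)) : Prop :=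
  (∀ i ∈ A, σ.perm i = π.perm i ∧ σ.col i = π.col i) ∧
  (∀ i ∉ A, ∃ j, j ∉ A ∧ (∀ j', j' ∉ A → cpos i j' ≤ cpos i j) ∧ σ.perm i = π.perm j) ∧
  (∀ i ∉ A, σ.col i = if σ.perm i = i then 1 else 0)

/-- The shift intervals `S^{π,σ}_i` partition `[n]`. -/
def ShiftPartition {n : ℕ} (π σ : DecoratedPerm n) : Prop :=
  (∀ i j : Fin n, i ≠ j → Disjoint (shiftInt π σ i) (shiftInt π σ j)) ∧
  Finset.univ.biUnion (shiftInt π σ) = Finset.univ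

/-- `C` is a cyclic component of `A`: a maximal cyclic interval contained in `A`. -/
def IsCycComponent {n : ℕ} [NeZero n] (A C : Finset (Fin n)) : Prop :=
  ∃ a b : Fin n, C = cycIcc a b ∧ C ⊆ A ∧ (a - 1) ∉ A ∧ (b + 1) ∉ A

/-- Bases of the lattice path matroid `M[U, L]`. -/
def lpmBases {n : ℕ} (U L : Finset (Fin n)) : Finset (Finset (Fin n)) :=
  Finset.univ.filter fun B => galeLE Fin.val U B ∧ galeLE Fin.val B L
end

/-! For a basis `B`, split `A` into its maximal cyclic intervals. A CW-arrow inside `A` is a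
cyclic interval, so it lies in one of them; hence it suffices to show
`|J ∩ B| + #{k : C_k ⊆ J} ≤ |J|` for a proper cyclic interval `J` starting at `a`. The arrows
inside `J` do not wrap around, so `k ↦ π(k)` maps them injectively into `J \ I_a`; and `J` is an
initial segment of `≤_a`, so the Gale inequality `I_a ≤_a B` gives `|J ∩ B| ≤ |J ∩ I_a|`. -/

section CyclicPosition

variable {n : ℕ}

lemma cpos_lt (i a : Fin n) : cpos i a < n := (a - i).isLt

lemma cpos_self (i : Fin n) : cpos i i = 0 := by
  have : NeZero n := ⟨i.pos.ne'⟩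
  simp [cpos]

lemma cpos_injective (i : Fin n) : Function.Injective (cpos i) := fun a b h => by
  have : NeZero n := ⟨i.pos.ne'⟩
  simpa using Fin.val_injective h

lemma cpos_eq_or (a k y : Fin n) :
    cpos a k ≤ cpos a y ∧ cpos k y = cpos a y - cpos a k ∨
      cpos a y < cpos a k ∧ cpos k y = n + cpos a y - cpos a k := by
  have : NeZero n := ⟨a.pos.ne'⟩
  have h : y - a = (k - a) + (y - k) := by abel
  have hk := cpos_lt a k
  have hy := cpos_lt k y
  unfold cpos at *
  rw [h, Fin.val_add_eq_ite]
  split_ifs <;> omega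

lemma cpos_sub_one [NeZero n] (a : Fin n) : cpos a (a - 1) = n - 1 := by
  obtain ⟨m, rfl⟩ := Nat.exists_eq_succ_of_ne_zero (NeZero.ne n)
  have h : a - 1 - a = -1 := by abel
  simp [cpos, h, Fin.coe_neg_one]

end CyclicPosition

section Gale

variable {n : ℕ}

lemma List.Forall₂.countP_le_le {α : Type*} [Preorder α] [DecidableLE α] {u v : List α}
    (h : List.Forall₂ (· ≤ ·) u v) (c : α) :
    v.countP (· ≤ c) ≤ u.countP (· ≤ c) := by
  induction h with
  | nil => simp
  | @cons a b u v hab _ ih =>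
    simp only [List.countP_cons, decide_eq_true_eq]
    by_cases hb : b ≤ c
    · simp only [hab.trans hb, hb, if_true]; omega
    · simp only [hb, if_false]; omega

lemma card_filter_le_eq_countP_sortedVals {f : Fin n → ℕ} (hf : Function.Injective f)
    (S : Finset (Fin n)) (c : ℕ) :
    (S.filter fun x => f x ≤ c).card = (sortedVals f S).countP (· ≤ c) := by
  rw [sortedVals, ← Multiset.coe_countP, Finset.sort_eq, Multiset.countP_eq_card_filter,
    ← Finset.filter_val, Finset.card_val, Finset.filter_image,
    Finset.card_image_of_injective _ hf]

lemma card_inter_le_of_galeLE {f : Fin n → ℕ} (hf : Function.Injective f)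
    {I B J : Finset (Fin n)} (h : galeLE f I B) (hJ : ∀ x ∈ J, ∀ y, f y ≤ f x → y ∈ J) :
    (J ∩ B).card ≤ (J ∩ I).card := by
  rcases J.eq_empty_or_nonempty with rfl | hne
  · simp
  obtain ⟨b, hb, hmax⟩ := J.exists_max_image f hne
  have hJ_inter : ∀ T : Finset (Fin n), J ∩ T = T.filter fun y => f y ≤ f b := by
    intro T
    ext y
    simp only [Finset.mem_inter, Finset.mem_filter]
    exact ⟨fun hy => ⟨hy.2, hmax y hy.1⟩, fun hy => ⟨hJ b hb y hy.2, hy.1⟩⟩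
  rw [hJ_inter, hJ_inter, card_filter_le_eq_countP_sortedVals hf,
    card_filter_le_eq_countP_sortedVals hf]
  exact h.countP_le_le _

end Gale

section Arrows

variable {n : ℕ}

lemma DecoratedPerm.col_perm_ne_neg_one (π : DecoratedPerm n) {k : Fin n}
    (hk : π.col k ≠ -1) : π.col (π.perm k) ≠ -1 := by
  by_cases hfix : π.perm k = k
  · rwa [hfix]
  · have : π.col (π.perm k) = 0 := (π.col_zero_iff _).2 fun h => hfix (π.perm.injective h)
    omega

lemma mem_cwArrow_iff (π : DecoratedPerm n) (k j : Fin n) :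
    j ∈ cwArrow π k ↔ π.col k = -1 ∨ cpos k j ≤ cpos k (π.perm k) := by
  unfold cwArrow
  split_ifs with h <;> simp [h]

lemma mem_neck_iff (π : DecoratedPerm n) (i a : Fin n) :
    a ∈ neck π i ↔ cpos i a < cpos i (π.perm.symm a) ∨ π.col a = -1 := by
  simp [neck]

def arrowsIn (π : DecoratedPerm n) (A : Finset (Fin n)) : Finset (Fin n) :=
  Finset.univ.filter fun k => cwArrow π k ⊆ A

lemma mem_arrowsIn (π : DecoratedPerm n) {A : Finset (Fin n)} {k : Fin n} :
    k ∈ arrowsIn π A ↔ cwArrow π k ⊆ A := by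
  simp [arrowsIn]

lemma arrowsIn_subset (π : DecoratedPerm n) (A : Finset (Fin n)) : arrowsIn π A ⊆ A :=
  fun k hk => (mem_arrowsIn π).1 hk <| (mem_cwArrow_iff π k k).2 <| .inr <| by
    rw [cpos_self]; exact Nat.zero_le _

lemma cw_of_ne_univ (π : DecoratedPerm n) {A : Finset (Fin n)} (hA : A ≠ Finset.univ) :
    cw π A = (arrowsIn π A).card := by
  rw [cw, if_neg hA, arrowsIn]

lemma col_ne_neg_one_of_cwArrow_subset (π : DecoratedPerm n) {k : Fin n} {A : Finset (Fin n)}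
    (hA : A ≠ Finset.univ) (hk : cwArrow π k ⊆ A) : π.col k ≠ -1 := fun hco =>
  hA <| Finset.eq_univ_of_forall fun j => hk <| (mem_cwArrow_iff π k j).2 (.inl hco)

/-- An arrow inside a proper initial segment `J` of the order `≤_a` cannot wrap around, so it
ends at some `π(k)` with `k ≤_a π(k)`, which is not in the necklace term `I_a`. -/
lemma perm_mem_sdiff_neck (π : DecoratedPerm n) {a k : Fin n} {J : Finset (Fin n)}
    (hJ : ∀ x ∈ J, ∀ y, cpos a y ≤ cpos a x → y ∈ J) (hJu : J ≠ Finset.univ)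
    (hk : cwArrow π k ⊆ J) : π.perm k ∈ J \ neck π a := by
  have hco := col_ne_neg_one_of_cwArrow_subset π hJu hk
  have hmem : ∀ j, cpos k j ≤ cpos k (π.perm k) → j ∈ J := fun j hj =>
    hk <| (mem_cwArrow_iff π k j).2 (.inr hj)
  have hkJ : k ∈ J := hmem k (by rw [cpos_self]; exact Nat.zero_le _)
  refine Finset.mem_sdiff.2 ⟨hmem _ le_rfl, ?_⟩
  rw [mem_neck_iff, Equiv.symm_apply_apply, not_or]
  refine ⟨fun hwrap => hJu <| Finset.eq_univ_of_forall fun y => ?_, π.col_perm_ne_neg_one hco⟩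
  by_cases hy : cpos a y ≤ cpos a k
  · exact hJ k hkJ y hy
  · apply hmem
    have := cpos_eq_or a k y
    have := cpos_eq_or a k (π.perm k)
    have := cpos_lt a y
    omega

lemma card_inter_add_card_arrowsIn_le_of_initialSegment (π : DecoratedPerm n) {a : Fin n}
    {B J : Finset (Fin n)} (hB : galeLE (cpos a) (neck π a) B)
    (hJ : ∀ x ∈ J, ∀ y, cpos a y ≤ cpos a x → y ∈ J) (hJu : J ≠ Finset.univ) :
    (J ∩ B).card + (arrowsIn π J).card ≤ J.card := by
  have hgale := card_inter_le_of_galeLE (cpos_injective a) hB hJ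
  have harrows : (arrowsIn π J).card ≤ (J \ neck π a).card :=
    Finset.card_le_card_of_injOn π.perm
      (fun k hk => perm_mem_sdiff_neck π hJ hJu ((mem_arrowsIn π).1 hk))
      π.perm.injective.injOn
  have := Finset.card_sdiff_add_card_inter J (neck π a)
  omega

end Arrows

section Runs

variable {n : ℕ}

/-- The maximal cyclic interval of `A` starting at `a` (empty if `a ∉ A`). -/
def runFrom (A : Finset (Fin n)) (a : Fin n) : Finset (Fin n) :=
  Finset.univ.filter fun y => cycIcc a y ⊆ A

lemma mem_runFrom {A : Finset (Fin n)} {a y : Fin n} :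
    y ∈ runFrom A a ↔ ∀ x, cpos a x ≤ cpos a y → x ∈ A := by
  simp [runFrom, cycIcc, Finset.subset_iff]

lemma runFrom_subset (A : Finset (Fin n)) (a : Fin n) : runFrom A a ⊆ A :=
  fun _ hy => mem_runFrom.1 hy _ le_rfl

lemma self_mem_runFrom {A : Finset (Fin n)} {a : Fin n} (ha : a ∈ A) : a ∈ runFrom A a :=
  mem_runFrom.2 fun x hx => by
    rw [cpos_self, Nat.le_zero] at hx
    rwa [cpos_injective a (hx.trans (cpos_self a).symm)]

lemma mem_runFrom_of_cpos_le {A : Finset (Fin n)} {a x y : Fin n} (hx : x ∈ runFrom A a)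
    (hy : cpos a y ≤ cpos a x) : y ∈ runFrom A a :=
  mem_runFrom.2 fun _ hz => mem_runFrom.1 hx _ (hz.trans hy)

lemma exists_mem_sub_one_notMem [NeZero n] {A : Finset (Fin n)} (hne : A.Nonempty)
    (hA : A ≠ Finset.univ) : ∃ a ∈ A, a - 1 ∉ A := by
  obtain ⟨z, hz⟩ : ∃ z, z ∉ A := by simpa [Finset.eq_univ_iff_forall] using hA
  obtain ⟨a, ha, hmin⟩ := A.exists_min_image (cpos z) hne
  refine ⟨a, ha, fun ha' => ?_⟩
  have hza : cpos z a ≠ 0 := fun h =>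
    hz (cpos_injective z (h.trans (cpos_self z).symm) ▸ ha)
  have := hmin _ ha'
  have := cpos_eq_or z a (a - 1)
  have := cpos_sub_one a
  have := cpos_lt z (a - 1)
  omega

/-- A CW-arrow inside `A` is a cyclic interval avoiding `a - 1`, so if it meets the run of `A`
starting at `a` it stays in it. -/
lemma cwArrow_subset_runFrom [NeZero n] (π : DecoratedPerm n) {A : Finset (Fin n)}
    {a k j : Fin n} (ha : a - 1 ∉ A) (hk : cwArrow π k ⊆ A) (hj : j ∈ cwArrow π k)
    (hjr : j ∈ runFrom A a) : cwArrow π k ⊆ runFrom A a := by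
  have hco : π.col k ≠ -1 :=
    col_ne_neg_one_of_cwArrow_subset π (by rintro rfl; exact ha (Finset.mem_univ _)) hk
  simp only [Finset.subset_iff, mem_cwArrow_iff, hco, false_or] at hk hj ⊢
  have hlast : cpos k (π.perm k) < cpos k (a - 1) := lt_of_not_ge fun h => ha (hk h)
  intro w hw
  refine mem_runFrom.2 fun v hv => ?_
  by_cases hvj : cpos a v ≤ cpos a j
  · exact mem_runFrom.1 hjr v hvj
  · apply hk
    have := cpos_sub_one a
    have := cpos_eq_or a k j
    have := cpos_eq_or a k w
    have := cpos_eq_or a k v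
    have := cpos_eq_or a k (a - 1)
    have := cpos_lt a k
    omega

end Runs

theorem card_inter_add_card_arrowsIn_le {n : ℕ} [NeZero n] (π : DecoratedPerm n)
    {B : Finset (Fin n)} (hB : ∀ i, galeLE (cpos i) (neck π i) B) (A : Finset (Fin n))
    (hA : A ≠ Finset.univ) : (A ∩ B).card + (arrowsIn π A).card ≤ A.card := by
  induction A using Finset.strongInduction with
  | H A ih =>
  rcases A.eq_empty_or_nonempty with rfl | hne
  · simpa using Finset.card_le_card (arrowsIn_subset π ∅)
  obtain ⟨a, ha, ha'⟩ := exists_mem_sub_one_notMem hne hA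
  set J := runFrom A a
  have hJA : J ⊆ A := runFrom_subset A a
  have hAu := Finset.ssubset_univ_iff.2 hA
  have hJ : (J ∩ B).card + (arrowsIn π J).card ≤ J.card :=
    card_inter_add_card_arrowsIn_le_of_initialSegment π (hB a)
      (fun _ hx _ hy => mem_runFrom_of_cpos_le hx hy)
      (Finset.ssubset_univ_iff.1 (hJA.trans_ssubset hAu))
  have hrest := ih (A \ J) (Finset.sdiff_ssubset hJA ⟨a, self_mem_runFrom ha⟩)
    (Finset.ssubset_univ_iff.1 (Finset.sdiff_subset.trans_ssubset hAu))
  have hinter : (A ∩ B).card ≤ (J ∩ B).card + ((A \ J) ∩ B).card := by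
    refine (Finset.card_le_card fun x hx => ?_).trans (Finset.card_union_le _ _)
    simp only [Finset.mem_union, Finset.mem_inter, Finset.mem_sdiff] at hx ⊢
    tauto
  have harrows : (arrowsIn π A).card ≤ (arrowsIn π J).card + (arrowsIn π (A \ J)).card := by
    refine (Finset.card_le_card fun k hk => ?_).trans (Finset.card_union_le _ _)
    rw [mem_arrowsIn] at hk
    rw [Finset.mem_union, mem_arrowsIn, mem_arrowsIn]
    by_cases hmeet : Disjoint (cwArrow π k) J
    · exact .inr (Finset.subset_sdiff.2 ⟨hk, hmeet⟩)
    · obtain ⟨j, hj, hjJ⟩ := Finset.not_disjoint_iff.1 hmeet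
      exact .inl (cwArrow_subset_runFrom π ha' hk hj hjJ)
  have := Finset.card_sdiff_add_card_eq_card hJA
  omega

theorem stmt12_general (n : ℕ) (π : DecoratedPerm n)
    (A : Finset (Fin n)) (hA : A ≠ Finset.univ) :
    rkOf (positroidBases π) A + cw π A ≤ A.card := by
  obtain ⟨z, -⟩ : ∃ z, z ∉ A := by simpa [Finset.eq_univ_iff_forall] using hA
  have : NeZero n := ⟨z.pos.ne'⟩
  have hrk : rkOf (positroidBases π) A ≤ A.card - (arrowsIn π A).card :=
    Finset.sup_le fun B hB => by
      have := card_inter_add_card_arrowsIn_le π (Finset.mem_filter.1 hB).2 A hA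
      omega
  have := Finset.card_le_card (arrowsIn_subset π A)
  rw [cw_of_ne_univ π hA]
  omega

/-- For a positroid without coloops and any proper subset `A ⊊ [n]`,
`rk(A) ≤ |A| - cw(A)`. -/
theorem stmt12 (n : ℕ) (π : DecoratedPerm n) (hco : ∀ i, π.col i ≠ -1)
    (A : Finset (Fin n)) (hA : A ≠ Finset.univ) :
    rkOf (positroidBases π) A + cw π A ≤ A.card :=
  stmt12_general n π A hA
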